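/- arXiv:0906.3467 — 6 statements merged into one kernel-verified Lean document; each statement's English description precedes it below -/
import Mathlib

section
/- For every even n ≥ 2, the family of all vectors in Z_2^n with exactly two coordinates equal to 1 satisfies Σ_j (x, f_j)^2 = (x, x) for all x ∈ Z_2^n, but does not span Z_2^n. -/
open Finset
lemma zmod2_ne (a : ZMod 2) (h : a ≠ 0) : a = 1 := by revert h; revert a; decide

lemma count_pairs (n : ℕ) (i : Fin n) :
    ((Finset.univ.filter fun v : Fin n → ZMod 2 =>
      (Finset.univ.filter fun k => v k = 1).card = 2 ∧ v i = 1)).card = n - 1 := by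
  have := Finset.card_bij (s := Finset.univ.erase i)
    (t := Finset.univ.filter fun v : Fin n → ZMod 2 =>
      (Finset.univ.filter fun k => v k = 1).card = 2 ∧ v i = 1)
    (fun j _ => fun k => if k = i ∨ k = j then 1 else 0)
    ?_ ?_ ?_
  · rw [← this, Finset.card_erase_of_mem (Finset.mem_univ i), Finset.card_univ, Fintype.card_fin]
  · intro j hj
    have hji : j ≠ i := Finset.ne_of_mem_erase hj
    simp only [Finset.mem_filter, Finset.mem_univ, true_and]
    constructor
    · have : (Finset.univ.filter fun k : Fin n =>
          (if k = i ∨ k = j then (1:ZMod 2) else 0) = 1) = {i, j} := by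
        ext k
        simp only [Finset.mem_filter, Finset.mem_univ, true_and, Finset.mem_insert,
          Finset.mem_singleton]
        by_cases h : k = i ∨ k = j <;> simp [h]
      rw [this, Finset.card_insert_of_notMem (by simp [hji.symm]), Finset.card_singleton]
    · simp
  · intro j₁ h₁ j₂ h₂ he
    have := congrFun he j₂
    simp only [or_true, if_true] at this
    by_cases h : j₂ = i ∨ j₂ = j₁
    · rcases h with h | h
      · exact absurd h (Finset.ne_of_mem_erase h₂)
      · exact h.symm
    · simp [h] at this
  · intro v hv
    simp only [Finset.mem_filter, Finset.mem_univ, true_and] at hv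
    obtain ⟨hc, hvi⟩ := hv
    have hi : i ∈ Finset.univ.filter fun k => v k = 1 := by simp [hvi]
    have h1 : ((Finset.univ.filter fun k => v k = 1).erase i).card = 1 := by
      rw [Finset.card_erase_of_mem hi, hc]
    obtain ⟨j, hj⟩ := Finset.card_eq_one.mp h1
    have hji : j ≠ i := by
      have : j ∈ (Finset.univ.filter fun k => v k = 1).erase i := hj ▸ Finset.mem_singleton_self j
      exact Finset.ne_of_mem_erase this
    refine ⟨j, Finset.mem_erase.mpr ⟨hji, Finset.mem_univ j⟩, ?_⟩
    funext k
    have hmem : ∀ k, v k = 1 ↔ (k = i ∨ k = j) := by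
      intro k
      constructor
      · intro h
        by_cases hki : k = i
        · exact Or.inl hki
        · right
          have : k ∈ (Finset.univ.filter fun m => v m = 1).erase i :=
            Finset.mem_erase.mpr ⟨hki, by simp [h]⟩
          rw [hj] at this; exact Finset.mem_singleton.mp this
      · intro h
        have hjv : v j = 1 := by
          have : j ∈ (Finset.univ.filter fun m => v m = 1).erase i := hj ▸ Finset.mem_singleton_self j
          exact (Finset.mem_filter.mp (Finset.mem_of_mem_erase this)).2
        rcases h with h | h <;> rw [h]
        · exact hvi
        · exact hjv
    by_cases h : k = i ∨ k = j
    · simp [h, (hmem k).mpr h]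
    · simp only [h, if_false]
      by_contra hne
      exact h ((hmem k).mp (zmod2_ne _ (Ne.symm hne)))

lemma zmod2_sq (a : ZMod 2) : a ^ 2 = a := by revert a; decide

lemma sum_eq_card (n : ℕ) (v : Fin n → ZMod 2) :
    ∑ i, v i = ((Finset.univ.filter fun i => v i = 1).card : ZMod 2) := by
  rw [← Finset.sum_filter_of_ne (p := fun i => v i = 1) (s := Finset.univ)
    (f := v) (fun i _ h => zmod2_ne _ h)]
  rw [Finset.sum_congr rfl (fun i hi => (Finset.mem_filter.mp hi).2)]
  simp

open Matrix

theorem binary_parseval_identity_counterexample_even (n : ℕ) (hn : 2 ≤ n)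
    (hev : Even n) :
    (∀ x : Fin n → ZMod 2,
        ∑ v ∈ Finset.univ.filter
            (fun v : Fin n → ZMod 2 =>
              (Finset.univ.filter fun i => v i = 1).card = 2),
          (x ⬝ᵥ v) ^ 2 = x ⬝ᵥ x) ∧
    Submodule.span (ZMod 2)
        ((Finset.univ.filter
            (fun v : Fin n → ZMod 2 =>
              (Finset.univ.filter fun i => v i = 1).card = 2) : Finset _) :
          Set (Fin n → ZMod 2)) ≠ ⊤ := by
  have hcastn : ((n : ℕ) : ZMod 2) = 0 := by
    rw [ZMod.natCast_eq_zero_iff]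
    exact hev.two_dvd
  have hn1 : ((n - 1 : ℕ) : ZMod 2) = 1 := by
    rw [Nat.cast_sub (by omega), hcastn]
    decide
  have key : ∀ i : Fin n,
      (∑ v ∈ Finset.univ.filter
          (fun v : Fin n → ZMod 2 =>
            (Finset.univ.filter fun k => v k = 1).card = 2), v i) = 1 := by
    intro i
    rw [← Finset.sum_filter_of_ne (p := fun v : Fin n → ZMod 2 => v i = 1)
      (fun v _ h => zmod2_ne _ h)]
    rw [Finset.sum_congr rfl (fun v hv => (Finset.mem_filter.mp hv).2)]
    rw [Finset.sum_const, Finset.filter_filter]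
    rw [nsmul_eq_mul, mul_one]
    have hcc : (Finset.univ.filter fun v : Fin n → ZMod 2 =>
        ((Finset.univ.filter fun k => v k = 1).card = 2 ∧ v i = 1)).card = n - 1 :=
      count_pairs n i
    rw [hcc, hn1]
  constructor
  · intro x
    calc ∑ v ∈ Finset.univ.filter
          (fun v : Fin n → ZMod 2 =>
            (Finset.univ.filter fun i => v i = 1).card = 2), (x ⬝ᵥ v) ^ 2
        = ∑ v ∈ Finset.univ.filter
          (fun v : Fin n → ZMod 2 =>
            (Finset.univ.filter fun i => v i = 1).card = 2), x ⬝ᵥ v := by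
          exact Finset.sum_congr rfl fun v _ => zmod2_sq _
      _ = ∑ i, x i * ∑ v ∈ Finset.univ.filter
          (fun v : Fin n → ZMod 2 =>
            (Finset.univ.filter fun i => v i = 1).card = 2), v i := by
          simp only [dotProduct, Finset.mul_sum]
          rw [Finset.sum_comm]
      _ = ∑ i, x i := by simp [key]
      _ = x ⬝ᵥ x := by
          simp only [dotProduct]
          exact Finset.sum_congr rfl fun i _ => by
            have := zmod2_sq (x i); rw [sq] at this; rw [this]
  · intro htop
    set φ : (Fin n → ZMod 2) →ₗ[ZMod 2] ZMod 2 := ∑ i, LinearMap.proj i with hφ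
    have hφapp : ∀ v, φ v = ∑ i, v i := by
      intro v; simp [hφ, LinearMap.proj]
    have hsub : Submodule.span (ZMod 2)
        ((Finset.univ.filter
            (fun v : Fin n → ZMod 2 =>
              (Finset.univ.filter fun i => v i = 1).card = 2) : Finset _) :
          Set (Fin n → ZMod 2)) ≤ LinearMap.ker φ := by
      rw [Submodule.span_le]
      intro v hv
      simp only [Finset.coe_filter, Set.mem_setOf_eq] at hv
      rw [SetLike.mem_coe, LinearMap.mem_ker, hφapp, sum_eq_card, hv.2]
      decide
    rw [htop, top_le_iff] at hsub
    have i0 : Fin n := ⟨0, by omega⟩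
    have hφ0 : φ = 0 := LinearMap.ker_eq_top.mp hsub
    have h1 : φ (Pi.single i0 1) = 0 := by rw [hφ0]; rfl
    rw [hφapp] at h1
    simp [Pi.single_apply] at h1
end

section
/- Two Parseval frames F = {f_1,...,f_k} and G = {g_1,...,g_k} for Z_2^n are unitarily equivalent (there exists a unitary U ∈ M_n(Z_2) with U f_i = g_i for all i) if and only if their Grammian matrices coincide: Θ_F Θ_F^* = Θ_G Θ_G^*. -/
open Matrix

theorem binary_unitary_equivalence_iff_grammian (n k : ℕ)
    (f g : Fin k → (Fin n → ZMod 2))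
    (hF : (Matrix.of f)ᵀ * Matrix.of f = 1)
    (hG : (Matrix.of g)ᵀ * Matrix.of g = 1) :
    (∃ U : Matrix (Fin n) (Fin n) (ZMod 2),
        IsUnit U ∧ U⁻¹ = Uᵀ ∧ ∀ i : Fin k, U.mulVec (f i) = g i) ↔
      Matrix.of f * (Matrix.of f)ᵀ = Matrix.of g * (Matrix.of g)ᵀ := by
  constructor
  · rintro ⟨U, hU, hUinv, hUf⟩
    have hUtU : Uᵀ * U = 1 := by
      rw [← hUinv]
      exact Matrix.nonsing_inv_mul U ((Matrix.isUnit_iff_isUnit_det U).mp hU)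
    have hg : Matrix.of g = Matrix.of f * Uᵀ := by
      ext i j
      have := congrFun (hUf i) j
      simp only [Matrix.mulVec, dotProduct] at this
      simp only [Matrix.mul_apply, Matrix.of_apply, Matrix.transpose_apply, ← this]
      exact Finset.sum_congr rfl fun l _ => mul_comm _ _
    rw [hg, Matrix.transpose_mul, Matrix.transpose_transpose, Matrix.mul_assoc,
      ← Matrix.mul_assoc Uᵀ, hUtU, Matrix.one_mul]
  · intro h
    have hr : ((Matrix.of g)ᵀ * Matrix.of f) * ((Matrix.of g)ᵀ * Matrix.of f)ᵀ = 1 := by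
      rw [Matrix.transpose_mul, Matrix.transpose_transpose, Matrix.mul_assoc,
        ← Matrix.mul_assoc (Matrix.of f), h, ← Matrix.mul_assoc, ← Matrix.mul_assoc, hG, Matrix.one_mul, hG]
    refine ⟨(Matrix.of g)ᵀ * Matrix.of f, ⟨⟨_, _, hr, by
      rw [Matrix.transpose_mul, Matrix.transpose_transpose, Matrix.mul_assoc,
        ← Matrix.mul_assoc (Matrix.of g), ← h, ← Matrix.mul_assoc, ← Matrix.mul_assoc, hF, Matrix.one_mul, hF]⟩, rfl⟩,
      Matrix.inv_eq_right_inv hr, ?_⟩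
    intro i
    have key : Matrix.of f * ((Matrix.of g)ᵀ * Matrix.of f)ᵀ = Matrix.of g := by
      rw [Matrix.transpose_mul, Matrix.transpose_transpose, ← Matrix.mul_assoc, h,
        Matrix.mul_assoc, hG, Matrix.mul_one]
    ext j
    have := congrFun (congrFun key i) j
    simp only [Matrix.mul_apply, Matrix.of_apply, Matrix.transpose_apply] at this
    simp only [Matrix.mulVec, dotProduct, ← this]
    exact Finset.sum_congr rfl fun l _ => mul_comm _ _
end

section
/- Two Parseval frames F and H in Z_2^n, each with k vectors, are switching equivalent if and only if there exists a permutation π of {1,...,k} with (G_F)_{i,j} = (G_H)_{π(i),π(j)} for all i, j. -/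
open Matrix

theorem binary_switching_equivalence_iff_grammian_permutation (n k : ℕ)
    (f h : Fin k → (Fin n → ZMod 2))
    (hF : (Matrix.of f)ᵀ * Matrix.of f = 1)
    (hH : (Matrix.of h)ᵀ * Matrix.of h = 1) :
    (∃ U : Matrix (Fin n) (Fin n) (ZMod 2), ∃ π : Equiv.Perm (Fin k),
        IsUnit U ∧ U⁻¹ = Uᵀ ∧ ∀ j : Fin k, f j = U.mulVec (h (π j))) ↔
      ∃ π : Equiv.Perm (Fin k), ∀ i j : Fin k,
        (Matrix.of f * (Matrix.of f)ᵀ) i j =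
          (Matrix.of h * (Matrix.of h)ᵀ) (π i) (π j) := by
  constructor
  · rintro ⟨U, π, hU, hinv, hf⟩
    refine ⟨π, fun i j => ?_⟩
    have hUdet : IsUnit U.det := (Matrix.isUnit_iff_isUnit_det U).mp hU
    have hUUt : U * Uᵀ = 1 := by
      rw [← hinv]; exact Matrix.mul_nonsing_inv U hUdet
    have hUtU : Uᵀ * U = 1 := mul_eq_one_comm.mp hUUt
    set H' : Matrix (Fin k) (Fin n) (ZMod 2) := Matrix.of (fun j => h (π j)) with hH'
    have hFe : Matrix.of f = H' * Uᵀ := by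
      ext j t
      simp [hH', Matrix.mul_apply, hf j, Matrix.mulVec, dotProduct, mul_comm]
    have key : Matrix.of f * (Matrix.of f)ᵀ = H' * H'ᵀ := by
      rw [hFe, Matrix.transpose_mul, Matrix.transpose_transpose, Matrix.mul_assoc,
        ← Matrix.mul_assoc Uᵀ, hUtU, Matrix.one_mul]
    rw [key]
    simp [hH', Matrix.mul_apply]
  · rintro ⟨π, hG⟩
    set F : Matrix (Fin k) (Fin n) (ZMod 2) := Matrix.of f with hFdef
    set H' : Matrix (Fin k) (Fin n) (ZMod 2) := Matrix.of (fun j => h (π j)) with hH'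
    have hHH : H' * H'ᵀ = F * Fᵀ := by
      ext i j
      have := hG i j
      simp only [hFdef, hH', Matrix.mul_apply, Matrix.transpose_apply, Matrix.of_apply]
        at this ⊢
      exact this.symm
    have hH'1 : H'ᵀ * H' = 1 := by
      rw [← hH]
      ext s t
      simp only [Matrix.mul_apply, Matrix.transpose_apply, hH', Matrix.of_apply]
      exact Equiv.sum_comp π (fun j => h j s * h j t)
    set U : Matrix (Fin n) (Fin n) (ZMod 2) := Fᵀ * H' with hUdef
    have hUUt : U * Uᵀ = 1 := by
      rw [hUdef, Matrix.transpose_mul, Matrix.transpose_transpose, Matrix.mul_assoc,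
        ← Matrix.mul_assoc H', hHH, Matrix.mul_assoc F, hF, Matrix.mul_one, hF]
    have hUtU' : Uᵀ * U = 1 := by
      have h2 : Uᵀ * U = H'ᵀ * (F * Fᵀ) * H' := by
        rw [hUdef, Matrix.transpose_mul, Matrix.transpose_transpose,
          Matrix.mul_assoc, Matrix.mul_assoc, Matrix.mul_assoc]
      rw [h2, ← hHH, ← Matrix.mul_assoc H'ᵀ H' H'ᵀ, hH'1, Matrix.one_mul, hH'1]
    have hUnit : IsUnit U :=
      (Matrix.isUnit_iff_isUnit_det U).mpr (Matrix.isUnit_det_of_right_inverse hUUt)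
    have hinv : U⁻¹ = Uᵀ := Matrix.inv_eq_right_inv hUUt
    refine ⟨U, π, hUnit, hinv, fun j => ?_⟩
    have hFe : F = H' * Uᵀ := by
      rw [hUdef, Matrix.transpose_mul, Matrix.transpose_transpose, ← Matrix.mul_assoc, hHH,
        Matrix.mul_assoc, hF, Matrix.mul_one]
    funext t
    have := congrFun (congrFun hFe j) t
    simp only [hFdef, hH', Matrix.mul_apply, Matrix.transpose_apply, Matrix.of_apply] at this
    simpa [Matrix.mulVec, dotProduct, mul_comm] using this
end

section
/- For n ≥ 3, if F is a Parseval frame for Z_2^n with no repeated vectors, then its set-theoretic complement G = Z_2^n \ F is also a Parseval frame for Z_2^n. -/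
open Matrix

lemma exists_third (n : ℕ) (hn : 3 ≤ n) (i j : Fin n) : ∃ k : Fin n, k ≠ i ∧ k ≠ j := by
  by_contra h
  push_neg at h
  have hall : ∀ k : Fin n, k = i ∨ k = j := fun k => by
    by_cases hk : k = i
    · exact Or.inl hk
    · exact Or.inr (h k hk)
  have : (Finset.univ : Finset (Fin n)) ⊆ {i, j} := by
    intro k _
    simp only [Finset.mem_insert, Finset.mem_singleton]
    exact hall k
  have hcard := Finset.card_le_card this
  simp only [Finset.card_univ, Fintype.card_fin] at hcard
  have : ({i, j} : Finset (Fin n)).card ≤ 2 := Finset.card_insert_le _ _ |>.trans (by simp)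
  omega

lemma sum_pair (n : ℕ) (hn : 3 ≤ n) (i j : Fin n) :
    ∑ f : Fin n → ZMod 2, f i * f j = 0 := by
  obtain ⟨k, hki, hkj⟩ := exists_third n hn i j
  apply Finset.sum_ninvolution (fun f => Function.update f k (f k + 1))
  · intro f
    have h1 : Function.update f k (f k + 1) i = f i := Function.update_of_ne (by simpa using (Ne.symm hki)) _ _ |>.trans rfl
    have h2 : Function.update f k (f k + 1) j = f j := Function.update_of_ne (by simpa using (Ne.symm hkj)) _ _
    rw [h1, h2]
    exact CharTwo.add_self_eq_zero _
  · intro f hf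
    intro hcontra
    have := congrFun hcontra k
    simp [Function.update_self] at this
  · intro f; exact Finset.mem_univ _
  · intro f
    funext l
    by_cases hl : l = k
    · subst hl
      simp only [Function.update_self]
      have h2 : (1 : ZMod 2) + 1 = 0 := rfl
      rw [add_assoc, h2, add_zero]
    · simp [Function.update_of_ne hl]

theorem binary_parseval_complement (n : ℕ) (hn : 3 ≤ n)
    (F : Finset (Fin n → ZMod 2))
    (hF : ∀ x : Fin n → ZMod 2, x = ∑ f ∈ F, (x ⬝ᵥ f) • f) :
    ∀ x : Fin n → ZMod 2, x = ∑ f ∈ Fᶜ, (x ⬝ᵥ f) • f := by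
  have huniv : ∀ x : Fin n → ZMod 2, ∑ f : Fin n → ZMod 2, (x ⬝ᵥ f) • f = 0 := by
    intro x
    funext j
    rw [Finset.sum_apply]
    simp only [Pi.smul_apply, smul_eq_mul, dotProduct]
    rw [Finset.sum_congr rfl (fun f _ => Finset.sum_mul ..)]
    rw [Finset.sum_comm]
    refine Finset.sum_eq_zero fun i _ => ?_
    have := sum_pair n hn i j
    calc ∑ f : Fin n → ZMod 2, x i * f i * f j
        = x i * ∑ f : Fin n → ZMod 2, f i * f j := by
          rw [Finset.mul_sum]; exact Finset.sum_congr rfl fun f _ => by ring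
      _ = 0 := by rw [this, mul_zero]
  intro x
  have hsplit : ∑ f ∈ F, (x ⬝ᵥ f) • f + ∑ f ∈ Fᶜ, (x ⬝ᵥ f) • f = 0 := by
    rw [Finset.sum_add_sum_compl]
    exact huniv x
  have := hF x
  rw [← this] at hsplit
  have hx : x = -(∑ f ∈ Fᶜ, (x ⬝ᵥ f) • f) := eq_neg_of_add_eq_zero_left hsplit
  have hneg : -(∑ f ∈ Fᶜ, (x ⬝ᵥ f) • f) = ∑ f ∈ Fᶜ, (x ⬝ᵥ f) • f := by
    funext j
    simp [CharTwo.neg_eq]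
  rw [hneg] at hx
  exact hx
end

section
/- If F is a Parseval frame for Z_2^n (n ≥ 3) with no repeated vectors and not containing the zero vector, and G = (Z_2^n \ F) \ {0}, then both F and G are Parseval frames and min(|F|, |G|) ≤ 2^{n-1} − 1. -/
open Matrix

lemma pair_sum_zero {n : ℕ} (hn : 3 ≤ n) (i j : Fin n) :
    ∑ f : Fin n → ZMod 2, f i * f j = 0 := by
  -- find k ≠ i, k ≠ j
  have hcard : ({i, j} : Finset (Fin n)).card < Fintype.card (Fin n) := by
    calc ({i, j} : Finset (Fin n)).card ≤ 2 := Finset.card_insert_le _ _ |>.trans (by simp)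
    _ < n := by omega
    _ = Fintype.card (Fin n) := by simp
  have hne : (({i, j} : Finset (Fin n))ᶜ).Nonempty := by
    rw [← Finset.card_pos, Finset.card_compl]
    omega
  obtain ⟨k, hk⟩ := hne
  rw [Finset.mem_compl] at hk
  have hki : k ≠ i := by simp at hk; tauto
  have hkj : k ≠ j := by simp at hk; tauto
  refine Finset.sum_ninvolution (fun (f : Fin n → ZMod 2) => f + (Pi.single k 1 : Fin n → ZMod 2)) ?_ ?_ (fun f => Finset.mem_univ _) ?_
  · intro f
    have h1 : (f + (Pi.single k 1 : Fin n → ZMod 2)) i = f i := by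
      simp [Pi.single_eq_of_ne (Ne.symm hki)]
    have h2 : (f + (Pi.single k 1 : Fin n → ZMod 2)) j = f j := by
      simp [Pi.single_eq_of_ne (Ne.symm hkj)]
    show f i * f j + (f + (Pi.single k 1 : Fin n → ZMod 2)) i * (f + (Pi.single k 1 : Fin n → ZMod 2)) j = 0
    rw [h1, h2]
    exact CharTwo.add_self_eq_zero _
  · intro f _
    intro hcontra
    have := congrFun hcontra k
    simp at this
  · intro f
    show (f + (Pi.single k 1 : Fin n → ZMod 2)) + (Pi.single k 1 : Fin n → ZMod 2) = f
    funext t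
    have h11 : (1 : ZMod 2) + 1 = 0 := by decide
    by_cases ht : t = k
    · subst ht
      simp [add_assoc, h11]
    · simp [Pi.single_eq_of_ne ht]

lemma full_sum_zero {n : ℕ} (hn : 3 ≤ n) (x : Fin n → ZMod 2) :
    ∑ f : Fin n → ZMod 2, (x ⬝ᵥ f) • f = 0 := by
  funext j
  rw [Finset.sum_apply]
  have : ∀ f : Fin n → ZMod 2, ((x ⬝ᵥ f) • f) j = ∑ i, x i * (f i * f j) := by
    intro f
    simp [dotProduct, Finset.sum_mul, mul_assoc]
  simp only [this]
  rw [Finset.sum_comm]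
  simp only [← Finset.mul_sum]
  simp [pair_sum_zero hn]

theorem binary_parseval_complement_size (n : ℕ) (hn : 3 ≤ n)
    (F : Finset (Fin n → ZMod 2)) (h0 : (0 : Fin n → ZMod 2) ∉ F)
    (hF : ∀ x : Fin n → ZMod 2, x = ∑ f ∈ F, (x ⬝ᵥ f) • f) :
    (∀ x : Fin n → ZMod 2, x = ∑ f ∈ Fᶜ \ {0}, (x ⬝ᵥ f) • f) ∧
      min F.card (Fᶜ \ {0}).card ≤ 2 ^ (n - 1) - 1 := by
  have h0c : (0 : Fin n → ZMod 2) ∈ Fᶜ := Finset.mem_compl.mpr h0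
  constructor
  · intro x
    have hsplit : ∑ f : Fin n → ZMod 2, (x ⬝ᵥ f) • f
        = (∑ f ∈ F, (x ⬝ᵥ f) • f) + ∑ f ∈ Fᶜ, (x ⬝ᵥ f) • f :=
      (Finset.sum_add_sum_compl F _).symm
    have hc0 : ∑ f ∈ Fᶜ, (x ⬝ᵥ f) • f = ∑ f ∈ Fᶜ \ {0}, (x ⬝ᵥ f) • f := by
      rw [← Finset.sum_sdiff (Finset.singleton_subset_iff.mpr h0c)]
      simp
    rw [full_sum_zero hn, ← hF x, hc0] at hsplit
    have hx : x = -(∑ f ∈ Fᶜ \ {0}, (x ⬝ᵥ f) • f) := by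
      rw [eq_neg_iff_add_eq_zero]; exact hsplit.symm
    calc x = -(∑ f ∈ Fᶜ \ {0}, (x ⬝ᵥ f) • f) := hx
    _ = ∑ f ∈ Fᶜ \ {0}, (x ⬝ᵥ f) • f := by
        funext t; simp [CharTwo.neg_eq]
  · have hcompl : Fᶜ.card = 2 ^ n - F.card := by
      rw [Finset.card_compl]
      congr 1
      simp [Fintype.card_fun]
    have hsd : (Fᶜ \ {0}).card = Fᶜ.card - 1 := by
      rw [Finset.card_sdiff_of_subset (Finset.singleton_subset_iff.mpr h0c)]
      simp
    have hFle : F.card ≤ 2 ^ n := by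
      calc F.card ≤ Fintype.card (Fin n → ZMod 2) := Finset.card_le_univ F
      _ = 2 ^ n := by simp [Fintype.card_fun]
    have h1le : 1 ≤ Fᶜ.card := Finset.card_pos.mpr ⟨0, h0c⟩
    have hpow : 2 ^ n = 2 * 2 ^ (n - 1) := by
      rw [← pow_succ']
      congr 1
      omega
    omega
end

section
/- If F and G are Parseval frames for Z_2^n and U = Θ_G^* Θ_F, then U is unitary whenever G_F = G_G, and moreover U Θ_F^* = Θ_G^*. -/
namespace Matrix

variable {m n R : Type*} [Fintype m] [Fintype n] [DecidableEq n]

theorem transpose_mul_mul_transpose_of_mul_transpose_eq [Semiring R] {A B : Matrix m n R}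
    (hB : Bᵀ * B = 1) (hAB : A * Aᵀ = B * Bᵀ) : Bᵀ * A * Aᵀ = Bᵀ := by
  rw [Matrix.mul_assoc, hAB, ← Matrix.mul_assoc, hB, Matrix.one_mul]

theorem transpose_mul_self_eq_one_of_mul_transpose_eq [CommSemiring R] {A B : Matrix m n R}
    (hA : Aᵀ * A = 1) (hAB : A * Aᵀ = B * Bᵀ) : (Bᵀ * A)ᵀ * (Bᵀ * A) = 1 :=
  calc (Bᵀ * A)ᵀ * (Bᵀ * A) = Aᵀ * (B * Bᵀ) * A := by
        rw [transpose_mul, transpose_transpose, Matrix.mul_assoc, Matrix.mul_assoc,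
          Matrix.mul_assoc]
    _ = (Aᵀ * A) * (Aᵀ * A) := by rw [← hAB, Matrix.mul_assoc, Matrix.mul_assoc, Matrix.mul_assoc]
    _ = 1 := by rw [hA, Matrix.one_mul]

theorem isUnit_and_inv_eq_transpose_of_transpose_mul_self [CommRing R] {U : Matrix n n R}
    (hU : Uᵀ * U = 1) : IsUnit U ∧ U⁻¹ = Uᵀ :=
  ⟨(isUnit_iff_isUnit_det U).2 (isUnit_det_of_left_inverse hU), inv_eq_left_inv hU⟩

end Matrix

open Matrix

theorem binary_canonical_unitary (n k : ℕ)
    (f g : Fin k → (Fin n → ZMod 2))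
    (hF : (Matrix.of f)ᵀ * Matrix.of f = 1)
    (hG : (Matrix.of g)ᵀ * Matrix.of g = 1)
    (hGram : Matrix.of f * (Matrix.of f)ᵀ = Matrix.of g * (Matrix.of g)ᵀ) :
    (IsUnit ((Matrix.of g)ᵀ * Matrix.of f) ∧
      ((Matrix.of g)ᵀ * Matrix.of f)⁻¹ = ((Matrix.of g)ᵀ * Matrix.of f)ᵀ) ∧
    ((Matrix.of g)ᵀ * Matrix.of f) * (Matrix.of f)ᵀ = (Matrix.of g)ᵀ :=
  ⟨isUnit_and_inv_eq_transpose_of_transpose_mul_self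
      (transpose_mul_self_eq_one_of_mul_transpose_eq hF hGram),
    transpose_mul_mul_transpose_of_mul_transpose_eq hG hGram⟩
end
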